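/- Let V be a variety of closure algebras containing an algebra M with an element a such that ◇◻a > ◻a (i.e., V is not a variety of monadic algebras). Then V contains the four-element closure algebra 4 (the Boolean algebra with atoms a, ¬a where a is open, ¬a is closed: ◻a = a, ◇¬a = ¬a, ◇a = 1, ◻¬a = 0). Equivalently, a variety of closure algebras omits 4 if and only if it satisfies the monadic identity ◇◻x = ◻x. -/

import Mathlib

/-- A modal algebra: a Boolean algebra with a unary operation `◇` satisfying
`◇⊥ = ⊥` and `◇(a ⊔ b) = ◇a ⊔ ◇b`. -/
class ModalAlg (M : Type) extends BooleanAlgebra M where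
  dia : M → M
  dia_bot : dia ⊥ = ⊥
  dia_sup : ∀ a b : M, dia (a ⊔ b) = dia a ⊔ dia b

/-- A closure algebra: a modal algebra satisfying `a ≤ ◇a = ◇◇a`. -/
class ClosAlg (M : Type) extends ModalAlg M where
  le_dia : ∀ a : M, a ≤ dia a
  dia_dia : ∀ a : M, dia (dia a) = dia a

/-- The possibility operator `◇`. -/
def dia {M : Type} [ModalAlg M] : M → M := ModalAlg.dia

/-- The necessity operator `◻x = ¬◇¬x`. -/
def box {M : Type} [ModalAlg M] (a : M) : M := (dia aᶜ)ᶜ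

/-- A homomorphism of closure algebras: it preserves the Boolean structure
(`⊔`, `ᶜ`, `⊥`, and hence `⊓`, `⊤`) and `◇`. -/
structure ClosHom (M N : Type) [ClosAlg M] [ClosAlg N] where
  toFun : M → N
  map_sup : ∀ a b : M, toFun (a ⊔ b) = toFun a ⊔ toFun b
  map_compl : ∀ a : M, toFun aᶜ = (toFun a)ᶜ
  map_bot : toFun ⊥ = ⊥
  map_dia : ∀ a : M, toFun (dia a) = dia (toFun a)

/-- The two-element closure algebra `2`, with identity `◇`. -/
instance : ModalAlg Bool :=
  { (inferInstance : BooleanAlgebra Bool) with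
    dia := id
    dia_bot := rfl
    dia_sup := fun _ _ => rfl }

instance : ClosAlg Bool :=
  { (inferInstance : ModalAlg Bool) with
    le_dia := fun _ => le_rfl
    dia_dia := fun _ => rfl }

/-- Pointwise closure algebra structure on a product. -/
instance piClosAlg {I : Type} (A : I → Type) [∀ i, ClosAlg (A i)] : ClosAlg (∀ i, A i) :=
  { (inferInstance : BooleanAlgebra (∀ i, A i)) with
    dia := fun x i => dia (x i)
    dia_bot := funext fun _ => ModalAlg.dia_bot
    dia_sup := fun a b => funext fun i => ModalAlg.dia_sup (a i) (b i)
    le_dia := fun a i => ClosAlg.le_dia (a i)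
    dia_dia := fun a => funext fun i => ClosAlg.dia_dia (a i) }

/-- A bundled closure algebra. -/
structure CAlg where
  carrier : Type
  [str : ClosAlg carrier]

attribute [instance] CAlg.str

/-- Direct product of a family of closure algebras. -/
def CAlg.pi {I : Type} (A : I → CAlg) : CAlg := ⟨∀ i, (A i).carrier⟩

/-- A class of closure algebras is a variety if it is closed under homomorphic images,
subalgebras (injective homomorphisms) and direct products. -/
def IsCAVariety (V : Set CAlg) : Prop :=
  (∀ A ∈ V, ∀ B : CAlg, ∀ f : ClosHom A.carrier B.carrier,
      Function.Surjective f.toFun → B ∈ V) ∧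
  (∀ A : CAlg, ∀ B ∈ V, ∀ f : ClosHom A.carrier B.carrier,
      Function.Injective f.toFun → A ∈ V) ∧
  (∀ (I : Type) (A : I → CAlg), (∀ i, A i ∈ V) → CAlg.pi A ∈ V)

/-- The "simple" closure structure on a Boolean algebra: `◇x = ⊤` for `x ≠ ⊥`. -/
def simpleClos (B : Type) [BooleanAlgebra B] [DecidableEq B] : ClosAlg B :=
  { (inferInstance : BooleanAlgebra B) with
    dia := fun x => if x = ⊥ then ⊥ else ⊤
    dia_bot := by simp
    dia_sup := by
      intro a b
      by_cases ha : a = ⊥ <;> by_cases hb : b = ⊥ <;>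
        simp [ha, hb, sup_eq_bot_iff]
    le_dia := by intro a; by_cases h : a = ⊥ <;> simp [h]
    dia_dia := by
      intro a
      by_cases h : a = ⊥ <;> by_cases h2 : (⊤ : B) = ⊥ <;> simp [h, h2] }

/-- `◇` of the four-element closure algebra `4`: the four-element Boolean algebra with
atoms `a = (true, false)` (open) and `¬a = (false, true)` (closed): `◇⊥ = ⊥`,
`◇(¬a) = ¬a`, `◇a = ⊤`, `◇⊤ = ⊤`. -/
def fourDia (x : Bool × Bool) : Bool × Bool :=
  if x = (false, false) then (false, false)
  else if x = (false, true) then (false, true)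
  else (true, true)

noncomputable def fourInst : ClosAlg (Bool × Bool) :=
  { (inferInstance : BooleanAlgebra (Bool × Bool)) with
    dia := fourDia
    dia_bot := by decide
    dia_sup := by decide
    le_dia := by decide
    dia_dia := by decide }

/-- The four-element closure algebra `4`. -/
noncomputable def Four : CAlg := @CAlg.mk (Bool × Bool) fourInst

/-!
If `b = ◻a` is strictly below `◇b`, then `b` is open but not closed, and `d = ¬◇b ∨ b` is an
open element with `◇d = ⊤` and `d ≠ ⊤`. The Boolean subalgebra `{⊥, d, ¬d, ⊤}` is then closed
under `◇` and is a copy of `4`, so `4` lies in every variety containing `a`'s algebra.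
Conversely `4` itself is not monadic: its open atom `a` has `◇◻a = ◇a = ⊤ ≠ a`.
-/

section ClosAlg

variable {M : Type} [ClosAlg M]

lemma dia_sup (a b : M) : dia (a ⊔ b) = dia a ⊔ dia b := ModalAlg.dia_sup a b

lemma dia_bot : dia (⊥ : M) = ⊥ := ModalAlg.dia_bot

lemma le_dia (a : M) : a ≤ dia a := ClosAlg.le_dia a

lemma dia_dia (a : M) : dia (dia a) = dia a := ClosAlg.dia_dia a

lemma dia_mono {a b : M} (h : a ≤ b) : dia a ≤ dia b :=
  calc dia a ≤ dia a ⊔ dia b := le_sup_left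
    _ = dia b := by rw [← dia_sup, sup_eq_right.mpr h]

lemma dia_top : dia (⊤ : M) = ⊤ := top_le_iff.mp (le_dia ⊤)

lemma dia_compl_box (a : M) : dia (box a)ᶜ = (box a)ᶜ := by
  simp only [box, compl_compl, dia_dia]

lemma exists_open_dense_ne_top {b : M} (hb : dia bᶜ = bᶜ) (hlt : b < dia b) :
    ∃ d : M, dia dᶜ = dᶜ ∧ dia d = ⊤ ∧ d ≠ ⊤ := by
  refine ⟨(dia b)ᶜ ⊔ b, ?_, ?_, ?_⟩
  · rw [compl_sup, compl_compl]
    refine le_antisymm (le_inf ?_ ?_) (le_dia _)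
    · exact (dia_mono inf_le_left).trans (dia_dia b).le
    · exact (dia_mono inf_le_right).trans hb.le
  · rw [dia_sup, eq_top_iff]
    calc (⊤ : M) = (dia b)ᶜ ⊔ dia b := compl_sup_eq_top.symm
      _ ≤ dia (dia b)ᶜ ⊔ dia b := sup_le_sup_right (le_dia _) _
  · intro htop
    rw [sup_comm, ← himp_eq, himp_eq_top_iff] at htop
    exact hlt.not_ge htop

end ClosAlg

namespace ClosHom

variable {M N : Type} [ClosAlg M] [ClosAlg N]

lemma map_inf (f : ClosHom M N) (a b : M) : f.toFun (a ⊓ b) = f.toFun a ⊓ f.toFun b := by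
  rw [← compl_compl (a ⊓ b), compl_inf, f.map_compl, f.map_sup, f.map_compl, f.map_compl,
    compl_sup, compl_compl, compl_compl]

lemma injective_of_map_eq_bot (f : ClosHom M N) (h : ∀ a, f.toFun a = ⊥ → a = ⊥) :
    Function.Injective f.toFun := by
  have hle : ∀ a b, f.toFun a = f.toFun b → a ≤ b := fun a b hab => by
    rw [← disjoint_compl_right_iff, disjoint_iff]
    exact h _ (by rw [map_inf, map_compl, hab, inf_compl_eq_bot])
  exact fun a b hab => le_antisymm (hle a b hab) (hle b a hab.symm)

end ClosHom

section FourEmbedding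

lemma four_sup (p q : Bool × Bool) : (p ⊔ q : CAlg.carrier Four) = (p.1 || q.1, p.2 || q.2) := rfl

lemma four_compl (p : Bool × Bool) : (pᶜ : CAlg.carrier Four) = (!p.1, !p.2) := rfl

lemma four_bot : (⊥ : CAlg.carrier Four) = (false, false) := rfl

lemma four_dia (p : Bool × Bool) : (dia p : CAlg.carrier Four) = fourDia p := rfl

variable {M : Type} [ClosAlg M] {d : M}

def fourEmbedding (hopen : dia dᶜ = dᶜ) (hdense : dia d = ⊤) : ClosHom (CAlg.carrier Four) M where
  toFun p := cond p.1 d ⊥ ⊔ cond p.2 dᶜ ⊥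
  map_sup := by
    rintro ⟨_ | _, _ | _⟩ ⟨_ | _, _ | _⟩ <;> simp [four_sup, sup_comm]
  map_compl := by
    rintro ⟨_ | _, _ | _⟩ <;> simp [four_compl]
  map_bot := by simp [four_bot]
  map_dia := by
    rintro ⟨_ | _, _ | _⟩ <;> simp [four_dia, fourDia, dia_bot, dia_top, hopen, hdense]

lemma fourEmbedding_injective (hopen : dia dᶜ = dᶜ) (hdense : dia d = ⊤) (hne : d ≠ ⊤) :
    Function.Injective (fourEmbedding hopen hdense).toFun := by
  have hd : d ≠ ⊥ := fun hd => hne (by rw [← hdense, hd, dia_bot])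
  have : Nontrivial M := nontrivial_of_ne d ⊥ hd
  apply ClosHom.injective_of_map_eq_bot
  rintro ⟨_ | _, _ | _⟩ h
  · rfl
  all_goals simp [fourEmbedding, hd, hne] at h

end FourEmbedding

lemma four_not_monadic : ∃ x : CAlg.carrier Four, dia (box x) ≠ box x :=
  ⟨(true, false), fun h => Bool.noConfusion (congrArg Prod.snd h : true = false)⟩

/-- if a variety `V` of closure algebras contains an algebra `M` with an
element `a` such that `◇◻a > ◻a` (i.e. `V` is not a variety of monadic algebras), then
`V` contains the four-element closure algebra `4`; equivalently, a variety of closure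
algebras omits `4` if and only if it satisfies the monadic identity `◇◻x = ◻x`. -/
theorem stmt9 (V : Set CAlg) (hV : IsCAVariety V) :
    ((∃ A ∈ V, ∃ a : A.carrier, box a < dia (box a)) → Four ∈ V) ∧
    (Four ∉ V ↔ ∀ A ∈ V, ∀ x : A.carrier, dia (box x) = box x) := by
  have four_mem : (∃ A ∈ V, ∃ a : A.carrier, box a < dia (box a)) → Four ∈ V := by
    rintro ⟨A, hA, a, ha⟩
    obtain ⟨d, hopen, hdense, hne⟩ := exists_open_dense_ne_top (dia_compl_box a) ha
    exact hV.2.1 Four A hA _ (fourEmbedding_injective hopen hdense hne)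
  refine ⟨four_mem, fun h4 A hA x => ?_, fun hmon h4 => ?_⟩
  · by_contra hne
    exact h4 (four_mem ⟨A, hA, x, (le_dia _).lt_of_ne' hne⟩)
  · obtain ⟨x, hx⟩ := four_not_monadic
    exact hx (hmon Four h4 x)
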